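/- (Spatial building blocks with disjoint supports.) Let Λ_θ = {e_1, e_2, e_3} and let Λ_v be a finite subset of S² ∩ Q³ disjoint from Λ_θ, where each k ∈ Λ_v ∪ Λ_θ carries an orthonormal basis (k, k̄, k̄̄) of R³, and let N_Λ be a positive integer such that N_Λ k, N_Λ k̄, N_Λ k̄̄ ∈ Z³ for every k ∈ Λ_v ∪ Λ_θ. Let λ ≥ 1 and let φ: R → R be a smooth 1-periodic function whose support within one period is contained in an interval of length λ^{−1}. Then, provided λ is sufficiently large (depending only on Λ_v ∪ Λ_θ and N_Λ), there exist shifts x^k ∈ R³ for k ∈ Λ_v ∪ Λ_θ such that the T³-periodic functions W^θ_{(k)}(x) = φ(N_Λ k̄·(x − x^k)) φ(N_Λ k̄̄·(x − x^k)) for k ∈ Λ_θ, and W^v_{(k)}(x) = φ(N_Λ k·(x − x^k)) φ(N_Λ k̄̄·(x − x^k)) for k ∈ Λ_v, have pairwise disjoint supports; that is, W^θ_{(k)} W^θ_{(k')} ≡ 0 for k ≠ k' in Λ_θ, W^v_{(k)} W^v_{(k')} ≡ 0 for k ≠ k' in Λ_v, and W^v_{(k)} W^θ_{(k')} ≡ 0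 for all k ∈ Λ_v, k' ∈ Λ_θ. -/

import Mathlib

open MeasureTheory Set Real Filter
open scoped ENNReal NNReal BigOperators

noncomputable section

abbrev V3 := Fin 3 → ℝ

/-- Fundamental domain of the torus `T³ = ℝ³/ℤ³`. -/
def cube3 : Set V3 := Set.univ.pi fun _ => Set.Ico (0:ℝ) 1

/-- The measure on the torus, realized as Lebesgue measure on the fundamental domain. -/
def muT : Measure V3 := volume.restrict cube3

/-- `ℤ³`-periodicity of a function on `ℝ³`. -/
def Per {α : Type*} (f : V3 → α) : Prop :=
  ∀ (x : V3) (k : Fin 3 → ℤ), f (x + (fun i => (k i : ℝ))) = f x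

/-- The partial derivative `∂ᵢ g` at `x`. -/
def pd (g : V3 → ℝ) (i : Fin 3) (x : V3) : ℝ := fderiv ℝ g x (Pi.single i 1)

/-- Divergence of a vector field. -/
def divg (u : V3 → V3) (x : V3) : ℝ := ∑ i, pd (fun y => u y i) i x

/-- Euclidean norm on `ℝ³`. -/
def nE (x : V3) : ℝ := Real.sqrt (∑ i, x i ^ 2)

/-- The building block `x ↦ φ(N a·(x-x₀)) φ(N b·(x-x₀))`. -/
def Wfn (φ : ℝ → ℝ) (N : ℕ) (a b x0 x : V3) : ℝ :=
  φ (∑ i, (N:ℝ) * a i * (x i - x0 i)) * φ (∑ i, (N:ℝ) * b i * (x i - x0 i))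

/-!
Write `a_k = N k̄, b_k = N k̄̄` (or `N k, N k̄̄`) as integer vectors, so that
`a_k ⬝ a_k = b_k ⬝ b_k = N²` and `a_k ⬝ b_k = 0`. Up to a phase, a block centred at `x_k` is
supported in `x_k + tube`, where on the tube `a_k ⬝ y` and `b_k ⬝ y` are within `λ⁻¹` of `ℤ`.
For `k ≠ k'` choose a nonzero `p ∈ ℤ³` orthogonal to `a_k × b_k` and to `a_{k'} × b_{k'}`: it
lies in both planes, so `N² p ⬝ y` is an integer combination of `a ⬝ y` and `b ⬝ y` and hence
within `O(λ⁻¹)` of `ℤ` on either tube. With centres `x_k = σ m_k u`, for distinct integers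
`m_k`, a small `σ > 0`, and `u = (1, L, L²)` for a Liouville number `L` (so that `p ⬝ u ≠ 0`),
the number `N² p ⬝ (x_{k'} - x_k)` stays a fixed distance away from `ℤ`, so the two tubes
cannot meet once `λ` is large.
-/

open Matrix Topology Pointwise

local notation "𝕋" => UnitAddCircle

theorem dotProduct_mul_gram {R : Type*} [CommRing R] (a b p y : Fin 3 → R) :
    ((a ⬝ᵥ a) * (b ⬝ᵥ b) - (a ⬝ᵥ b) ^ 2) * (p ⬝ᵥ y) =
      (p ⬝ᵥ a) * ((b ⬝ᵥ b) * (a ⬝ᵥ y) - (a ⬝ᵥ b) * (b ⬝ᵥ y)) +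
      (p ⬝ᵥ b) * ((a ⬝ᵥ a) * (b ⬝ᵥ y) - (a ⬝ᵥ b) * (a ⬝ᵥ y)) +
      (p ⬝ᵥ a ⨯₃ b) * (y ⬝ᵥ a ⨯₃ b) := by
  simp_rw [cross_apply, vec3_dotProduct]
  simp only [Fin.isValue, cons_val_zero, cons_val_one, cons_val_two, head_cons, tail_cons]
  ring

structure IsOrthoPair {R : Type*} [CommRing R] (M : R) (a b : Fin 3 → R) : Prop where
  dotProduct_self_left : a ⬝ᵥ a = M
  dotProduct_self_right : b ⬝ᵥ b = M
  dotProduct_eq_zero : a ⬝ᵥ b = 0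

theorem IsOrthoPair.mul_dotProduct {K : Type*} [Field K] {M : K} {a b p : Fin 3 → K}
    (h : IsOrthoPair M a b) (hM : M ≠ 0) (hp : p ⬝ᵥ a ⨯₃ b = 0) (y : Fin 3 → K) :
    M * (p ⬝ᵥ y) = (p ⬝ᵥ a) * (a ⬝ᵥ y) + (p ⬝ᵥ b) * (b ⬝ᵥ y) := by
  have key := dotProduct_mul_gram a b p y
  rw [h.dotProduct_self_left, h.dotProduct_self_right, h.dotProduct_eq_zero, hp] at key
  apply mul_left_cancel₀ hM
  linear_combination key

theorem exists_ne_zero_dotProduct_eq_zero₂ {R : Type*} [CommRing R] [IsDomain R]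
    (v w : Fin 3 → R) : ∃ p ≠ 0, p ⬝ᵥ v = 0 ∧ p ⬝ᵥ w = 0 := by
  obtain ⟨p, hp, hmul⟩ := (exists_mulVec_eq_zero_iff (M := Matrix.of ![v, w, 0])).2
    (det_eq_zero_of_row_eq_zero 2 fun _ => rfl)
  refine ⟨p, hp, ?_, ?_⟩
  · simpa [mulVec, dotProduct_comm] using congrFun hmul 0
  · simpa [mulVec, dotProduct_comm] using congrFun hmul 1

theorem Transcendental.sum_mul_pow_ne_zero {R A : Type*} [CommRing R] [CommRing A]
    [Algebra R A] {x : A} (hx : Transcendental R x) {n : ℕ} {p : Fin n → R} (hp : p ≠ 0) :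
    ∑ i, algebraMap R A (p i) * x ^ (i : ℕ) ≠ 0 := by
  intro h
  have hq := transcendental_iff.1 hx (∑ i, Polynomial.C (p i) * Polynomial.X ^ (i : ℕ))
    (by simpa [map_sum, Polynomial.aeval_def] using h)
  refine hp (funext fun j => ?_)
  simpa [Polynomial.finsetSum_coeff, Polynomial.coeff_C_mul_X_pow, Fin.val_inj] using
    congrArg (Polynomial.coeff · j) hq

def castVec (a : Fin 3 → ℤ) : V3 := fun i => (a i : ℝ)

@[simp] theorem castVec_dotProduct (a b : Fin 3 → ℤ) :
    castVec a ⬝ᵥ castVec b = ((a ⬝ᵥ b : ℤ) : ℝ) := by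
  simp [castVec, dotProduct]

@[simp] theorem castVec_cross (a b : Fin 3 → ℤ) :
    castVec (a ⨯₃ b) = castVec a ⨯₃ castVec b := by
  ext i; fin_cases i <;> simp [castVec, cross_apply]

theorem IsOrthoPair.castVec {M : ℤ} {a b : Fin 3 → ℤ} (h : IsOrthoPair M a b) :
    IsOrthoPair (M : ℝ) (castVec a) (castVec b) :=
  ⟨by simp [h.dotProduct_self_left], by simp [h.dotProduct_self_right],
    by simp [h.dotProduct_eq_zero]⟩

/-- The `ε`-neighbourhood, measured in `𝕋 = ℝ/ℤ`, of the `ℤ³`-periodic family of lines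
`{y | a ⬝ y ∈ ℤ, b ⬝ y ∈ ℤ}`. -/
def tube (ε : ℝ) (a b : Fin 3 → ℤ) : Set V3 :=
  {y | ‖((castVec a ⬝ᵥ y : ℝ) : 𝕋)‖ ≤ ε ∧ ‖((castVec b ⬝ᵥ y : ℝ) : 𝕋)‖ ≤ ε}

theorem norm_coe_intCast_mul_le (m : ℤ) (z : ℝ) :
    ‖(((m : ℝ) * z : ℝ) : 𝕋)‖ ≤ |(m : ℝ)| * ‖(z : 𝕋)‖ := by
  rw [← zsmul_eq_mul, AddCircle.coe_zsmul, ← Int.norm_eq_abs]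
  exact norm_zsmul_le m _

theorem norm_coe_mul_dotProduct_le {M : ℤ} (hM : M ≠ 0) {a b p : Fin 3 → ℤ}
    (h : IsOrthoPair M a b) (hp : p ⬝ᵥ a ⨯₃ b = 0) {ε : ℝ} {y : V3} (hy : y ∈ tube ε a b) :
    ‖((M * (castVec p ⬝ᵥ y) : ℝ) : 𝕋)‖ ≤ (|p ⬝ᵥ a| + |p ⬝ᵥ b| : ℤ) * ε := by
  have hp' : castVec p ⬝ᵥ castVec a ⨯₃ castVec b = 0 := by
    rw [← castVec_cross, castVec_dotProduct, hp, Int.cast_zero]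
  rw [h.castVec.mul_dotProduct (Int.cast_ne_zero.2 hM) hp', castVec_dotProduct,
    castVec_dotProduct, AddCircle.coe_add]
  push_cast
  calc _ ≤ |((p ⬝ᵥ a : ℤ) : ℝ)| * ‖((castVec a ⬝ᵥ y : ℝ) : 𝕋)‖ +
          |((p ⬝ᵥ b : ℤ) : ℝ)| * ‖((castVec b ⬝ᵥ y : ℝ) : 𝕋)‖ :=
        (norm_add_le _ _).trans
          (add_le_add (norm_coe_intCast_mul_le _ _) (norm_coe_intCast_mul_le _ _))
    _ ≤ _ := by
      rw [add_mul]
      gcongr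
      exacts [hy.1, hy.2]

theorem disjoint_vadd_tube {M : ℤ} (hM : M ≠ 0) {a b a' b' p : Fin 3 → ℤ}
    (h : IsOrthoPair M a b) (h' : IsOrthoPair M a' b') (hp : p ⬝ᵥ a ⨯₃ b = 0)
    (hp' : p ⬝ᵥ a' ⨯₃ b' = 0) {ε : ℝ} {x x' : V3}
    (hε : (|p ⬝ᵥ a| + |p ⬝ᵥ b| + |p ⬝ᵥ a'| + |p ⬝ᵥ b'| : ℤ) * ε <
      ‖((M * (castVec p ⬝ᵥ (x' - x)) : ℝ) : 𝕋)‖) :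
    Disjoint (x +ᵥ tube ε a b) (x' +ᵥ tube ε a' b') := by
  refine Set.disjoint_left.2 fun y hy hy' => hε.not_ge ?_
  rw [Set.mem_vadd_set_iff_neg_vadd_mem] at hy hy'
  have hxy : x' - x = (-x +ᵥ y) - (-x' +ᵥ y) := by simp only [vadd_eq_add]; abel
  rw [hxy, dotProduct_sub, mul_sub, AddCircle.coe_sub]
  calc _ ≤ _ := norm_sub_le _ _
    _ ≤ _ := add_le_add (norm_coe_mul_dotProduct_le hM h hp hy)
        (norm_coe_mul_dotProduct_le hM h' hp' hy')
    _ = _ := by push_cast; ring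

theorem eventually_abs_mul_lt (c : ℝ) {r : ℝ} (hr : 0 < r) :
    ∀ᶠ t in 𝓝 (0 : ℝ), |t * c| < r := by
  have : Tendsto (fun t : ℝ => |t * c|) (𝓝 0) (𝓝 0) := by
    simpa using ((continuous_id.mul continuous_const).abs.tendsto (0 : ℝ))
  exact this.eventually_lt_const hr

theorem Set.Finite.exists_pos_forall_abs_mul_lt {ι : Type*} {s : Set ι} (hs : s.Finite)
    (c : ι → ℝ) {r : ι → ℝ} (hr : ∀ i ∈ s, 0 < r i) : ∃ t > 0, ∀ i ∈ s, |t * c i| < r i := by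
  have h : ∀ᶠ t in 𝓝[>] (0 : ℝ), ∀ i ∈ s, |t * c i| < r i :=
    hs.eventually_all.2 fun i hi =>
      eventually_nhdsWithin_of_eventually_nhds (eventually_abs_mul_lt _ (hr i hi))
  obtain ⟨t, ht, ht0⟩ := (h.and self_mem_nhdsWithin).exists
  exact ⟨t, ht0, ht⟩

theorem exists_shifts_pairwiseDisjoint_tube {ι : Type*} {s : Set ι} (hs : s.Finite) {M : ℤ}
    (hM : M ≠ 0) {a b : ι → Fin 3 → ℤ} (hab : ∀ k ∈ s, IsOrthoPair M (a k) (b k)) :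
    ∃ xs : ι → V3, ∃ ε > 0, s.PairwiseDisjoint fun k => xs k +ᵥ tube ε (a k) (b k) := by
  choose p hp0 hp hp' using fun q : ι × ι =>
    exists_ne_zero_dotProduct_eq_zero₂ (a q.1 ⨯₃ b q.1) (a q.2 ⨯₃ b q.2)
  set u : V3 := fun i => liouvilleNumber 3 ^ (i : ℕ)
  have hu : ∀ q, castVec (p q) ⬝ᵥ u ≠ 0 := fun q => by
    simpa [castVec, dotProduct] using
      (transcendental_liouvilleNumber (by norm_num : 2 ≤ 3)).sum_mul_pow_ne_zero (hp0 q)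
  obtain ⟨m, hm⟩ := Set.countable_iff_exists_injOn.1 hs.countable
  set C : ι × ι → ℝ := fun q => M * (((m q.2 : ℝ) - m q.1) * (castVec (p q) ⬝ᵥ u))
  obtain ⟨σ, hσ, hσC⟩ := hs.offDiag.exists_pos_forall_abs_mul_lt C (r := fun _ => 1 / 2)
    fun _ _ => one_half_pos
  have hσC0 : ∀ q ∈ s.offDiag, 0 < |σ * C q| := by
    rintro ⟨k, k'⟩ ⟨hk, hk', hne⟩
    have hmk : (m k' : ℝ) - m k ≠ 0 :=
      sub_ne_zero.2 (Nat.cast_injective.ne (hm.ne hk' hk hne.symm))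
    exact abs_pos.2 (mul_ne_zero hσ.ne'
      (mul_ne_zero (Int.cast_ne_zero.2 hM) (mul_ne_zero hmk (hu _))))
  set K : ι × ι → ℤ := fun q =>
    |p q ⬝ᵥ a q.1| + |p q ⬝ᵥ b q.1| + |p q ⬝ᵥ a q.2| + |p q ⬝ᵥ b q.2|
  obtain ⟨ε, hε, hεK⟩ := hs.offDiag.exists_pos_forall_abs_mul_lt (fun q => K q) hσC0
  refine ⟨fun k => (σ * m k) • u, ε, hε, fun k hk k' hk' hne => ?_⟩
  have hq : (k, k') ∈ s.offDiag := ⟨hk, hk', hne⟩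
  refine disjoint_vadd_tube hM (hab k hk) (hab k' hk') (hp (k, k')) (hp' (k, k')) ?_
  have hz : (M : ℝ) * (castVec (p (k, k')) ⬝ᵥ ((σ * m k') • u - (σ * m k) • u)) =
      σ * C (k, k') := by
    simp only [C, ← sub_smul, dotProduct_smul, smul_eq_mul]; ring
  rw [hz, (AddCircle.norm_coe_eq_abs_iff _ one_ne_zero).2 (by simpa using (hσC _ hq).le),
    mul_comm]
  exact (le_abs_self _).trans_lt (hεK _ hq)

theorem norm_coe_sub_le_of_mem_Icc {c ε z : ℝ} (h : ∃ n : ℤ, c + n ≤ z ∧ z ≤ c + n + ε) :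
    ‖((z - c : ℝ) : 𝕋)‖ ≤ ε := by
  obtain ⟨n, h₁, h₂⟩ := h
  rw [UnitAddCircle.norm_eq]
  exact (round_le _ n).trans (abs_le.2 ⟨by linarith, by linarith⟩)

theorem castVec_dotProduct_inv_smul_add {M : ℤ} (hM : M ≠ 0) {a b : Fin 3 → ℤ}
    (h : IsOrthoPair M a b) :
    castVec a ⬝ᵥ ((M : ℝ)⁻¹ • castVec (a + b)) = 1 ∧
      castVec b ⬝ᵥ ((M : ℝ)⁻¹ • castVec (a + b)) = 1 := by
  simp only [dotProduct_smul, castVec_dotProduct, dotProduct_add, h.dotProduct_self_left,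
    h.dotProduct_self_right, h.dotProduct_eq_zero, dotProduct_comm b a, smul_eq_mul]
  simp [hM]

theorem mem_vadd_tube_of_mul_ne_zero {φ : ℝ → ℝ} {c ε : ℝ}
    (hφ : ∀ z, φ z ≠ 0 → ∃ n : ℤ, c + n ≤ z ∧ z ≤ c + n + ε) {M : ℤ} (hM : M ≠ 0)
    {a b : Fin 3 → ℤ} (h : IsOrthoPair M a b) {x₀ x : V3}
    (hx : φ (castVec a ⬝ᵥ (x - (x₀ - c • (M : ℝ)⁻¹ • castVec (a + b)))) *
      φ (castVec b ⬝ᵥ (x - (x₀ - c • (M : ℝ)⁻¹ • castVec (a + b)))) ≠ 0) :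
    x ∈ x₀ +ᵥ tube ε a b := by
  obtain ⟨ha, hb⟩ := castVec_dotProduct_inv_smul_add hM h
  have hshift : x - (x₀ - c • (M : ℝ)⁻¹ • castVec (a + b)) =
      (-x₀ +ᵥ x) + c • (M : ℝ)⁻¹ • castVec (a + b) := by
    rw [vadd_eq_add]; abel
  rw [hshift] at hx
  rw [Set.mem_vadd_set_iff_neg_vadd_mem]
  constructor
  · simpa [dotProduct_add, dotProduct_smul, ha] using
      norm_coe_sub_le_of_mem_Icc (hφ _ (left_ne_zero_of_mul hx))
  · simpa [dotProduct_add, dotProduct_smul, hb] using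
      norm_coe_sub_le_of_mem_Icc (hφ _ (right_ne_zero_of_mul hx))

theorem Wfn_eq {N : ℕ} {u v : V3} {a b : Fin 3 → ℤ} (ha : ∀ i, (N : ℝ) * u i = a i)
    (hb : ∀ i, (N : ℝ) * v i = b i) (φ : ℝ → ℝ) (x₀ x : V3) :
    Wfn φ N u v x₀ x = φ (castVec a ⬝ᵥ (x - x₀)) * φ (castVec b ⬝ᵥ (x - x₀)) := by
  simp only [Wfn, dotProduct, castVec, Pi.sub_apply, ← ha, ← hb]

theorem isOrthoPair_of_orthonormal {N : ℕ} {u v : V3} {a b : Fin 3 → ℤ}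
    (ha : ∀ i, (N : ℝ) * u i = a i) (hb : ∀ i, (N : ℝ) * v i = b i)
    (hu : ∑ i, u i ^ 2 = 1) (hv : ∑ i, v i ^ 2 = 1) (huv : ∑ i, u i * v i = 0) :
    IsOrthoPair ((N : ℤ) ^ 2) a b := by
  have hA : castVec a = (N : ℝ) • u := funext fun i => (ha i).symm
  have hB : castVec b = (N : ℝ) • v := funext fun i => (hb i).symm
  refine ⟨?_, ?_, ?_⟩ <;> apply Int.cast_injective (α := ℝ) <;>
    simp only [← castVec_dotProduct, hA, hB, dotProduct_smul, smul_dotProduct, smul_eq_mul] <;>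
    simp only [dotProduct, ← sq, hu, hv, huv] <;> push_cast <;> ring

theorem exists_shifts_Wfn_mul_Wfn_eq_zero {ι : Type*} {s : Set ι} (hs : s.Finite) {N : ℕ}
    (hN : 0 < N) (u v : ι → V3)
    (horth : ∀ k ∈ s, ∑ i, u k i ^ 2 = 1 ∧ ∑ i, v k i ^ 2 = 1 ∧ ∑ i, u k i * v k i = 0)
    (hint : ∀ k ∈ s,
      (∀ i, ∃ m : ℤ, (N : ℝ) * u k i = m) ∧ (∀ i, ∃ m : ℤ, (N : ℝ) * v k i = m)) :
    ∃ lam0 : ℝ, ∀ lam : ℝ, lam0 ≤ lam → ∀ φ : ℝ → ℝ,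
      (∃ c : ℝ, ∀ z : ℝ, φ z ≠ 0 → ∃ n : ℤ, c + n ≤ z ∧ z ≤ c + n + lam⁻¹) →
      ∃ xs : ι → V3, ∀ k ∈ s, ∀ k' ∈ s, k ≠ k' → ∀ x : V3,
        Wfn φ N (u k) (v k) (xs k) x * Wfn φ N (u k') (v k') (xs k') x = 0 := by
  choose! a ha using fun k hk => (hint k hk).1
  choose! b hb using fun k hk => (hint k hk).2
  have hM : (N : ℤ) ^ 2 ≠ 0 := by positivity
  have hab : ∀ k ∈ s, IsOrthoPair ((N : ℤ) ^ 2) (a k) (b k) := fun k hk =>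
    let ⟨hu, hv, huv⟩ := horth k hk
    isOrthoPair_of_orthonormal (ha k hk) (hb k hk) hu hv huv
  obtain ⟨xs, ε, hε, hdisj⟩ := exists_shifts_pairwiseDisjoint_tube hs hM hab
  refine ⟨ε⁻¹, fun lam hlam φ ⟨c, hc⟩ => ?_⟩
  -- the shift by a multiple of `a + b` absorbs the phase `c` of the support of `φ`
  refine ⟨fun k => xs k - c • (((N : ℤ) ^ 2 : ℤ) : ℝ)⁻¹ • castVec (a k + b k),
    fun k hk k' hk' hne x => by_contra fun hx => ?_⟩
  have hlamε : lam⁻¹ ≤ ε := inv_le_of_inv_le₀ hε hlam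
  have hc' : ∀ z, φ z ≠ 0 → ∃ n : ℤ, c + n ≤ z ∧ z ≤ c + n + ε := fun z hz =>
    (hc z hz).imp fun _ hn => ⟨hn.1, hn.2.trans (by linarith)⟩
  rw [Wfn_eq (ha k hk) (hb k hk), Wfn_eq (ha k' hk') (hb k' hk')] at hx
  exact Set.disjoint_left.1 (hdisj hk hk' hne)
    (mem_vadd_tube_of_mul_ne_zero hc' hM (hab k hk) (left_ne_zero_of_mul hx))
    (mem_vadd_tube_of_mul_ne_zero hc' hM (hab k' hk') (right_ne_zero_of_mul hx))

theorem stmt13_general (Λθ Λv : Set V3)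
    (hΛθ : ∀ k : V3, k ∈ Λθ ↔ (k = Pi.single 0 1 ∨ k = Pi.single 1 1 ∨ k = Pi.single 2 1))
    (hΛvfin : Λv.Finite) (hdisj : Disjoint Λv Λθ)
    (kb kbb : V3 → V3)
    (hbasis : ∀ k : V3, k ∈ Λv ∨ k ∈ Λθ →
      (∑ i, (k i)^2 = 1) ∧ (∑ i, (kb k i)^2 = 1) ∧ (∑ i, (kbb k i)^2 = 1) ∧
      (∑ i, k i * kb k i = 0) ∧ (∑ i, k i * kbb k i = 0) ∧ (∑ i, kb k i * kbb k i = 0))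
    (NΛ : ℕ) (hN : 0 < NΛ)
    (hNint : ∀ k : V3, k ∈ Λv ∨ k ∈ Λθ →
      (∀ i, ∃ m : ℤ, (NΛ:ℝ) * k i = (m:ℝ)) ∧ (∀ i, ∃ m : ℤ, (NΛ:ℝ) * kb k i = (m:ℝ)) ∧
      (∀ i, ∃ m : ℤ, (NΛ:ℝ) * kbb k i = (m:ℝ))) :
    ∃ lam0 : ℝ, ∀ lam : ℝ, lam0 ≤ lam → 1 ≤ lam →
      ∀ φ : ℝ → ℝ, ContDiff ℝ (⊤ : ℕ∞) φ → Function.Periodic φ 1 →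
        (∃ c : ℝ, ∀ z : ℝ, φ z ≠ 0 → ∃ n : ℤ, c + (n:ℝ) ≤ z ∧ z ≤ c + (n:ℝ) + lam⁻¹) →
        ∃ xs : V3 → V3,
          (∀ k ∈ Λθ, ∀ k' ∈ Λθ, k ≠ k' → ∀ x : V3,
            Wfn φ NΛ (kb k) (kbb k) (xs k) x * Wfn φ NΛ (kb k') (kbb k') (xs k') x = 0) ∧
          (∀ k ∈ Λv, ∀ k' ∈ Λv, k ≠ k' → ∀ x : V3,
            Wfn φ NΛ k (kbb k) (xs k) x * Wfn φ NΛ k' (kbb k') (xs k') x = 0) ∧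
          (∀ k ∈ Λv, ∀ k' ∈ Λθ, ∀ x : V3,
            Wfn φ NΛ k (kbb k) (xs k) x * Wfn φ NΛ (kb k') (kbb k') (xs k') x = 0) := by
  classical
  have hθfin : Λθ.Finite :=
    (Set.toFinite {Pi.single 0 1, Pi.single 1 1, Pi.single 2 1}).subset fun k hk => by
      simpa using (hΛθ k).1 hk
  set u : V3 → V3 := fun k => if k ∈ Λθ then kb k else k
  have huθ : ∀ k ∈ Λθ, u k = kb k := fun k hk => if_pos hk
  have huv : ∀ k ∈ Λv, u k = k := fun k hk => if_neg (hdisj.notMem_of_mem_left hk)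
  obtain ⟨lam0, hlam0⟩ := exists_shifts_Wfn_mul_Wfn_eq_zero (hΛvfin.union hθfin) hN u kbb
    (fun k hk => by
      obtain ⟨h₁, h₂, h₃, -, h₅, h₆⟩ := hbasis k hk
      dsimp only [u]; split_ifs
      exacts [⟨h₂, h₃, h₆⟩, ⟨h₁, h₃, h₅⟩])
    (fun k hk => by
      obtain ⟨h₁, h₂, h₃⟩ := hNint k hk
      dsimp only [u]; split_ifs
      exacts [⟨h₂, h₃⟩, ⟨h₁, h₃⟩])
  refine ⟨lam0, fun lam hlam _ φ _ _ hφ => ?_⟩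
  obtain ⟨xs, hxs⟩ := hlam0 lam hlam φ hφ
  refine ⟨xs, fun k hk k' hk' hne x => ?_, fun k hk k' hk' hne x => ?_, fun k hk k' hk' x => ?_⟩
  · simpa only [huθ k hk, huθ k' hk'] using hxs k (Or.inr hk) k' (Or.inr hk') hne x
  · simpa only [huv k hk, huv k' hk'] using hxs k (Or.inl hk) k' (Or.inl hk') hne x
  · simpa only [huv k hk, huθ k' hk'] using
      hxs k (Or.inl hk) k' (Or.inr hk') (hdisj.ne_of_mem hk hk') x

/-- spatial building blocks supported in thin disjoint cuboids.
For `λ` large (depending only on the direction sets and `N_Λ`) there exist shifts making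
all the cuboid flows `W^θ_{(k)}`, `W^v_{(k)}` have pairwise disjoint supports. -/
theorem stmt13 (Λθ Λv : Set V3)
    (hΛθ : ∀ k : V3, k ∈ Λθ ↔ (k = Pi.single 0 1 ∨ k = Pi.single 1 1 ∨ k = Pi.single 2 1))
    (hΛvfin : Λv.Finite) (hdisj : Disjoint Λv Λθ)
    (kb kbb : V3 → V3)
    (hbasis : ∀ k : V3, k ∈ Λv ∨ k ∈ Λθ →
      (∑ i, (k i)^2 = 1) ∧ (∑ i, (kb k i)^2 = 1) ∧ (∑ i, (kbb k i)^2 = 1) ∧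
      (∑ i, k i * kb k i = 0) ∧ (∑ i, k i * kbb k i = 0) ∧ (∑ i, kb k i * kbb k i = 0))
    (hrat : ∀ k : V3, k ∈ Λv ∨ k ∈ Λθ → ∀ i, ∃ r : ℚ, k i = (r : ℝ))
    (NΛ : ℕ) (hN : 0 < NΛ)
    (hNint : ∀ k : V3, k ∈ Λv ∨ k ∈ Λθ →
      (∀ i, ∃ m : ℤ, (NΛ:ℝ) * k i = (m:ℝ)) ∧ (∀ i, ∃ m : ℤ, (NΛ:ℝ) * kb k i = (m:ℝ)) ∧
      (∀ i, ∃ m : ℤ, (NΛ:ℝ) * kbb k i = (m:ℝ))) :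
    ∃ lam0 : ℝ, ∀ lam : ℝ, lam0 ≤ lam → 1 ≤ lam →
      ∀ φ : ℝ → ℝ, ContDiff ℝ (⊤ : ℕ∞) φ → Function.Periodic φ 1 →
        (∃ c : ℝ, ∀ z : ℝ, φ z ≠ 0 → ∃ n : ℤ, c + (n:ℝ) ≤ z ∧ z ≤ c + (n:ℝ) + lam⁻¹) →
        ∃ xs : V3 → V3,
          (∀ k ∈ Λθ, ∀ k' ∈ Λθ, k ≠ k' → ∀ x : V3,
            Wfn φ NΛ (kb k) (kbb k) (xs k) x * Wfn φ NΛ (kb k') (kbb k') (xs k') x = 0) ∧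
          (∀ k ∈ Λv, ∀ k' ∈ Λv, k ≠ k' → ∀ x : V3,
            Wfn φ NΛ k (kbb k) (xs k) x * Wfn φ NΛ k' (kbb k') (xs k') x = 0) ∧
          (∀ k ∈ Λv, ∀ k' ∈ Λθ, ∀ x : V3,
            Wfn φ NΛ k (kbb k) (xs k) x * Wfn φ NΛ (kb k') (kbb k') (xs k') x = 0) :=
  stmt13_general Λθ Λv hΛθ hΛvfin hdisj kb kbb hbasis NΛ hN hNint
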